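/- arXiv:2604.06060 — 2 statements merged into one kernel-verified Lean document; each statement's English description precedes it below -/
import Mathlib

section
/- Let Σ : ℕ → Matrix n n ℝ satisfy the recursion Σ_{t+1} = (1 − p·θ_{t+1})·(A Σ_t Aᵀ + W) for t ≥ k, with initial condition Σ_k = (1 − p·θ_k)·E, where each θ_s ∈ {0,1} and 0 ≤ p ≤ 1. Then for all t ≥ k, Σ_t = ∑_{τ=k}^{t} (1−p)^{c_{t,τ}} · G_{t,τ}, where c_{t,τ} := ∑_{s=τ}^{t} θ_s, G_{t,k} := A^{t−k} E (A^{t−k})ᵀ, and G_{t,τ} := A^{t−τ} W (A^{t−τ})ᵀ for τ ≥ k+1. -/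
/-!
Each step of the recursion propagates the state by the linear map `X ↦ A X Aᵀ`, adds `W`, and
scales by `1 - p θ`, which equals `(1 - p) ^ θ` because `θ ∈ {0, 1}`. Unrolling, the term injected
at time `τ` (`E` at `τ = k`, `W` afterwards) has been propagated `t - τ` times and scaled by every
factor from `τ` to `t`, whose product is `(1 - p) ^ (∑_{s=τ}^{t} θ_s)`.
-/

open Matrix Finset

theorem one_sub_mul_natCast_eq_pow_of_le_one {R : Type*} [CommRing R] (p : R) {b : ℕ}
    (hb : b ≤ 1) : 1 - p * b = (1 - p) ^ b := by
  interval_cases b <;> simp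

theorem eq_sum_prod_smul_pow_of_scaled_affine_recursion {R M : Type*} [CommSemiring R]
    [AddCommMonoid M] [Module R M] (L : Module.End R M) (c : ℕ → R) (E W : M) (k : ℕ)
    (S : ℕ → M) (hinit : S k = c k • E)
    (hrec : ∀ t, k ≤ t → S (t + 1) = c (t + 1) • (L (S t) + W)) :
    ∀ t, k ≤ t →
      S t = ∑ τ ∈ Icc k t, (∏ s ∈ Icc τ t, c s) • (L ^ (t - τ)) (if τ = k then E else W) := by
  intro t ht
  induction t, ht using Nat.le_induction with
  | base => simp [hinit]
  | succ t ht ih =>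
    rw [hrec t ht, ih, sum_Icc_succ_top (by omega), map_sum, smul_add, smul_sum,
      if_neg (by omega : t + 1 ≠ k)]
    congr 1
    · refine sum_congr rfl fun τ hτ => ?_
      have hτt : τ ≤ t := (mem_Icc.mp hτ).2
      rw [prod_Icc_succ_top (by omega), map_smul, smul_smul, mul_comm,
        show t + 1 - τ = t - τ + 1 by omega, pow_succ', Module.End.mul_apply]
    · simp

namespace Matrix

variable {m R : Type*} [Fintype m] [DecidableEq m] [CommSemiring R]

def transposeCongr (A : Matrix m m R) : Module.End R (Matrix m m R) :=
  LinearMap.mulLeft R A ∘ₗ LinearMap.mulRight R Aᵀ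

@[simp]
theorem transposeCongr_apply (A X : Matrix m m R) : transposeCongr A X = A * X * Aᵀ :=
  (Matrix.mul_assoc A X Aᵀ).symm

theorem transposeCongr_pow_apply (A X : Matrix m m R) (j : ℕ) :
    (transposeCongr A ^ j) X = A ^ j * X * (A ^ j)ᵀ := by
  induction j with
  | zero => simp
  | succ j ih =>
    rw [pow_succ', Module.End.mul_apply, ih]
    simp [pow_succ', transpose_mul, Matrix.mul_assoc]

end Matrix

theorem closed_form_covariance_general {n : ℕ}
    (A W E : Matrix (Fin n) (Fin n) ℝ) (p : ℝ)
    (θ : ℕ → ℕ) (hθ : ∀ s, θ s ≤ 1) (k : ℕ)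
    (Sig : ℕ → Matrix (Fin n) (Fin n) ℝ)
    (hinit : Sig k = (1 - p * (θ k : ℝ)) • E)
    (hrec : ∀ t, k ≤ t →
      Sig (t + 1) = (1 - p * (θ (t + 1) : ℝ)) • (A * Sig t * Aᵀ + W)) :
    ∀ t, k ≤ t →
      Sig t = ∑ τ ∈ Finset.Icc k t,
        (1 - p) ^ (∑ s ∈ Finset.Icc τ t, θ s) •
          (if τ = k then A ^ (t - k) * E * (A ^ (t - k))ᵀ
           else A ^ (t - τ) * W * (A ^ (t - τ))ᵀ) := by
  have hfactor (s : ℕ) : 1 - p * (θ s : ℝ) = (1 - p) ^ θ s :=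
    one_sub_mul_natCast_eq_pow_of_le_one p (hθ s)
  simp only [hfactor, ← transposeCongr_apply] at hinit hrec
  intro t ht
  rw [eq_sum_prod_smul_pow_of_scaled_affine_recursion (transposeCongr A) (fun s => (1 - p) ^ θ s)
    E W k Sig hinit hrec t ht]
  refine sum_congr rfl fun τ _ => ?_
  rw [prod_pow_eq_pow_sum]
  split_ifs with hτ
  · rw [hτ, transposeCongr_pow_apply]
  · rw [transposeCongr_pow_apply]

/-- Closed-form solution of the erasure-channel covariance recursion:
`Σ_{t+1} = (1 − p θ_{t+1})(A Σ_t Aᵀ + W)` with `Σ_k = (1 − p θ_k) E` implies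
`Σ_t = ∑_{τ=k}^{t} (1−p)^{∑_{s=τ}^{t} θ_s} G_{t,τ}`. -/
theorem closed_form_covariance {n : ℕ}
    (A W E : Matrix (Fin n) (Fin n) ℝ) (p : ℝ) (hp0 : 0 ≤ p) (hp1 : p ≤ 1)
    (θ : ℕ → ℕ) (hθ : ∀ s, θ s ≤ 1) (k : ℕ)
    (Sig : ℕ → Matrix (Fin n) (Fin n) ℝ)
    (hinit : Sig k = (1 - p * (θ k : ℝ)) • E)
    (hrec : ∀ t, k ≤ t →
      Sig (t + 1) = (1 - p * (θ (t + 1) : ℝ)) • (A * Sig t * Aᵀ + W)) :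
    ∀ t, k ≤ t →
      Sig t = ∑ τ ∈ Finset.Icc k t,
        (1 - p) ^ (∑ s ∈ Finset.Icc τ t, θ s) •
          (if τ = k then A ^ (t - k) * E * (A ^ (t - k))ᵀ
           else A ^ (t - τ) * W * (A ^ (t - τ))ᵀ) :=
  closed_form_covariance_general A W E p θ hθ k Sig hinit hrec
end

section
/- Ratio upper bound relative to the lossless optimum: with J_p and J_1 as in the schedule-cost definitions, let J_p⋆ := min_Θ J_p(Θ) and J_1⋆ := min_Θ J_1(Θ) over all binary schedules Θ ∈ {0,1}^{T−k}, and let Θ₁⋆ be any minimizer of J_1. If J_1⋆ > 0 then J_p⋆ / J_1⋆ ≤ 1 + (1−p)·(∑_{t=k}^{T−1}∑_{τ=k}^{t} 1{c_{t,τ}(Θ₁⋆) ≥ 1}·g_{t,τ}) / J_1⋆. -/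
/-! The lossless minimizer `Θ₁⋆` is itself a schedule, so `J_p⋆ ≤ J_p(Θ₁⋆)`. Comparing `J_p(Θ₁⋆)`
with `J_1(Θ₁⋆)` term by term: the switching costs agree, an interval that `Θ₁⋆` never covers
contributes `g` to both, and a covered one contributes `(1-p)^c g ≤ (1-p) g` to `J_p`. -/

open Finset

def intervalCount (θ : ℕ → ℕ) (τ t : ℕ) : ℕ := ∑ s ∈ Finset.Icc τ t, θ s

noncomputable def Jp (k T : ℕ) (lam p : ℝ) (g : ℕ → ℕ → ℝ) (θ : ℕ → ℕ) : ℝ :=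
  lam * ∑ t ∈ Finset.Ico k T, (θ t : ℝ)
    + ∑ t ∈ Finset.Ico k T, ∑ τ ∈ Finset.Icc k t,
        (1 - p) ^ (intervalCount θ τ t) * g t τ

noncomputable def J1 (k T : ℕ) (lam : ℝ) (g : ℕ → ℕ → ℝ) (θ : ℕ → ℕ) : ℝ :=
  lam * ∑ t ∈ Finset.Ico k T, (θ t : ℝ)
    + ∑ t ∈ Finset.Ico k T, ∑ τ ∈ Finset.Icc k t,
        (if intervalCount θ τ t = 0 then g t τ else 0)

lemma pow_mul_le_ite_add_mul_ite {x a : ℝ} (hx0 : 0 ≤ x) (hx1 : x ≤ 1) (ha : 0 ≤ a) (n : ℕ) :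
    x ^ n * a ≤ (if n = 0 then a else 0) + x * (if 1 ≤ n then a else 0) := by
  cases n with
  | zero => simp
  | succ n =>
    simp only [Nat.succ_ne_zero, if_false, Nat.le_add_left, if_true, zero_add]
    exact mul_le_mul_of_nonneg_right (pow_le_of_le_one hx0 hx1 n.succ_ne_zero) ha

lemma Jp_le_J1_add_covered (k T : ℕ) (lam p : ℝ) (hp0 : 0 ≤ p) (hp1 : p ≤ 1) (g : ℕ → ℕ → ℝ)
    (hg : ∀ t τ, k ≤ τ → τ ≤ t → t ≤ T - 1 → 0 ≤ g t τ) (θ : ℕ → ℕ) :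
    Jp k T lam p g θ ≤ J1 k T lam g θ + (1 - p) *
      ∑ t ∈ Ico k T, ∑ τ ∈ Icc k t, (if 1 ≤ intervalCount θ τ t then g t τ else 0) := by
  unfold Jp J1
  rw [add_assoc]
  gcongr lam * _ + ?_
  simp only [mul_sum, ← sum_add_distrib]
  refine sum_le_sum fun t ht => sum_le_sum fun τ hτ => ?_
  rw [mem_Ico] at ht
  rw [mem_Icc] at hτ
  exact pow_mul_le_ite_add_mul_ite (by linarith) (by linarith)
    (hg t τ hτ.1 hτ.2 (Nat.le_sub_one_of_lt ht.2)) _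

theorem ratio_upper_bound_general (k T : ℕ) (lam : ℝ)
    (p : ℝ) (hp0 : 0 ≤ p) (hp1 : p ≤ 1)
    (g : ℕ → ℕ → ℝ) (hg : ∀ t τ, k ≤ τ → τ ≤ t → t ≤ T - 1 → 0 ≤ g t τ)
    (θ1 θp : ℕ → ℕ) (hθ1 : ∀ s, θ1 s ≤ 1)
    (hminp : ∀ θ : ℕ → ℕ, (∀ s, θ s ≤ 1) → Jp k T lam p g θp ≤ Jp k T lam p g θ)
    (hJ1pos : 0 < J1 k T lam g θ1) :
    Jp k T lam p g θp / J1 k T lam g θ1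
      ≤ 1 + (1 - p) *
          (∑ t ∈ Finset.Ico k T, ∑ τ ∈ Finset.Icc k t,
              (if 1 ≤ intervalCount θ1 τ t then g t τ else 0))
            / J1 k T lam g θ1 := by
  rw [div_le_iff₀ hJ1pos, add_mul, one_mul, div_mul_cancel₀ _ hJ1pos.ne']
  exact (hminp θ1 hθ1).trans (Jp_le_J1_add_covered k T lam p hp0 hp1 g hg θ1)

/-- Ratio upper bound of the optimal lossy cost relative to the lossless
optimum: `J_p⋆ / J_1⋆ ≤ 1 + (1−p) (∑ 1{c_{t,τ}(Θ₁⋆) ≥ 1} g_{t,τ}) / J_1⋆`. -/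
theorem ratio_upper_bound (k T : ℕ) (hkT : k < T) (lam : ℝ) (hlam : 0 ≤ lam)
    (p : ℝ) (hp0 : 0 ≤ p) (hp1 : p ≤ 1)
    (g : ℕ → ℕ → ℝ) (hg : ∀ t τ, k ≤ τ → τ ≤ t → t ≤ T - 1 → 0 ≤ g t τ)
    (θ1 θp : ℕ → ℕ) (hθ1 : ∀ s, θ1 s ≤ 1) (hθp : ∀ s, θp s ≤ 1)
    (hmin1 : ∀ θ : ℕ → ℕ, (∀ s, θ s ≤ 1) → J1 k T lam g θ1 ≤ J1 k T lam g θ)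
    (hminp : ∀ θ : ℕ → ℕ, (∀ s, θ s ≤ 1) → Jp k T lam p g θp ≤ Jp k T lam p g θ)
    (hJ1pos : 0 < J1 k T lam g θ1) :
    Jp k T lam p g θp / J1 k T lam g θ1
      ≤ 1 + (1 - p) *
          (∑ t ∈ Finset.Ico k T, ∑ τ ∈ Finset.Icc k t,
              (if 1 ≤ intervalCount θ1 τ t then g t τ else 0))
            / J1 k T lam g θ1 :=
  ratio_upper_bound_general k T lam p hp0 hp1 g hg θ1 θp hθ1 hminp hJ1pos
end
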